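/- arXiv:0905.0273 — 5 statements merged into one kernel-verified Lean document; each statement's English description precedes it below -/
import Mathlib

section
/- Let T > 0, let N ≥ 1 be an integer, and set r := max(3N/T, 1). Suppose y_1, y_2, …, y_N are real numbers and w_1, …, w_{N−1} are real numbers satisfying y_{k+1} = y_k − (T/N)·y_k³ + w_k and |w_k| ≤ 1 for every k = 1, …, N−1, and suppose |y_1| ≥ r. Then |y_k| ≥ r^{2^{k−1}} for every k = 1, 2, …, N. -/
theorem stmt_3 (T : ℝ) (hT : 0 < T) (N : ℕ) (hN : 1 ≤ N)
    (r : ℝ) (hr : r = max (3 * N / T) 1)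
    (y w : ℕ → ℝ)
    (hrec : ∀ k, 1 ≤ k → k ≤ N - 1 → y (k + 1) = y k - (T / N) * (y k) ^ 3 + w k)
    (hw : ∀ k, 1 ≤ k → k ≤ N - 1 → |w k| ≤ 1)
    (hy1 : r ≤ |y 1|) :
    ∀ k, 1 ≤ k → k ≤ N → r ^ (2 ^ (k - 1)) ≤ |y k| := by
  have hr1 : (1:ℝ) ≤ r := by rw [hr]; exact le_max_right _ _
  have hrT : 3 * N / T ≤ r := by rw [hr]; exact le_max_left _ _
  have hNpos : (0:ℝ) < N := by exact_mod_cast Nat.lt_of_lt_of_le Nat.zero_lt_one hN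
  have hc : (0:ℝ) < T / N := div_pos hT hNpos
  have hcr : 3 ≤ (T / N) * r := by
    rw [div_mul_eq_mul_div, le_div_iff₀ hNpos]
    have := (div_le_iff₀ hT).mp hrT
    nlinarith
  intro k
  induction k with
  | zero => intro h; omega
  | succ n ih =>
    intro h1 hkN
    rcases Nat.eq_zero_or_pos n with hn0 | hn1
    · subst hn0; simpa using hy1
    · have ihn := ih hn1 (by omega)
      have hrecn := hrec n hn1 (by omega)
      have hwn := hw n hn1 (by omega)
      set a := r ^ (2 ^ (n - 1)) with ha
      set b := |y n| with hb
      have hrle : r ≤ a := by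
        calc r = r ^ 1 := (pow_one r).symm
        _ ≤ a := pow_le_pow_right₀ hr1 Nat.one_le_two_pow
      have hab : a ≤ b := ihn
      have hrpos : (0:ℝ) < r := lt_of_lt_of_le one_pos hr1
      have hcb : 3 ≤ (T / N) * b := by
        calc (3:ℝ) ≤ (T / N) * r := hcr
        _ ≤ (T / N) * b := by nlinarith
      -- |y (n+1)| ≥ (T/N) b^3 - b - 1
      have h1' : |(T / N) * (y n) ^ 3| - |y n| ≤ |y n - (T / N) * (y n) ^ 3| := by
        have := abs_sub_abs_le_abs_sub ((T / N) * (y n) ^ 3) (y n)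
        calc |(T / N) * (y n) ^ 3| - |y n| ≤ |(T / N) * (y n) ^ 3 - y n| := this
        _ = |y n - (T / N) * (y n) ^ 3| := abs_sub_comm _ _
      have h2' : |y n - (T / N) * (y n) ^ 3| ≤ |y (n + 1)| + |w n| := by
        have : y n - (T / N) * (y n) ^ 3 = y (n + 1) - w n := by rw [hrecn]; ring
        rw [this]
        exact abs_sub _ _
      have habs : |(T / N) * (y n) ^ 3| = (T / N) * b ^ 3 := by
        rw [abs_mul, abs_of_pos hc, abs_pow]
      have hkey : (T / N) * b ^ 3 - b - 1 ≤ |y (n + 1)| := by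
        rw [habs] at h1'
        linarith
      have hgoal2 : a ^ 2 ≤ (T / N) * b ^ 3 - b - 1 := by
        have h3b : 3 * b ^ 2 ≤ (T / N) * b ^ 3 := by nlinarith [sq_nonneg b]
        nlinarith
      have hexp : r ^ (2 ^ (n + 1 - 1)) = a ^ 2 := by
        rw [ha, ← pow_mul]
        congr 1
        have : n + 1 - 1 = (n - 1) + 1 := by omega
        rw [this, pow_succ]
      rw [hexp]
      linarith
end

section
/- Let T > 0, let N ≥ 1 be an integer, and let r ≥ 1 be a real number with (T/N)·r − 2 ≥ 1. Then for all real numbers y and w with |y| ≥ r and |w| ≤ 1, one has |y − (T/N)·y³ + w| ≥ y². -/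
theorem stmt_4 (T : ℝ) (hT : 0 < T) (N : ℕ) (hN : 1 ≤ N)
    (r : ℝ) (hr1 : 1 ≤ r) (hr : 1 ≤ (T / N) * r - 2) :
    ∀ y w : ℝ, r ≤ |y| → |w| ≤ 1 → y ^ 2 ≤ |y - (T / N) * y ^ 3 + w| := by
  intro y w hy hw
  set h := T / N with hh
  have hN0 : (0:ℝ) < N := by exact_mod_cast Nat.pos_of_ne_zero (by omega)
  have h0 : 0 < h := div_pos hT hN0
  have hay : (1:ℝ) ≤ |y| := le_trans hr1 hy
  have h1 : |y - h * y ^ 3| - |w| ≤ |y - h * y ^ 3 + w| := by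
    have := abs_add_le (y - h * y ^ 3 + w) (-w)
    simp at this
    linarith [this]
  have h2 : |h * y ^ 3| - |y| ≤ |y - h * y ^ 3| := by
    have := abs_sub_abs_le_abs_sub (h * y ^ 3) y
    rw [abs_sub_comm] at this
    linarith
  have h3 : |h * y ^ 3| = h * |y| ^ 3 := by
    rw [abs_mul, abs_pow, abs_of_pos h0]
  have h4 : |y| ^ 2 = y ^ 2 := sq_abs y
  nlinarith [sq_nonneg (|y| - 1), mul_le_mul_of_nonneg_left hy (le_of_lt h0),
    mul_le_mul_of_nonneg_right hr (sq_nonneg y),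
    mul_le_mul_of_nonneg_left (mul_pos h0 (lt_of_lt_of_le one_pos hr1)).le (sq_nonneg y)]
end

section
/- Let T > 0, let (Ω, F, P) be a probability space carrying a standard Brownian motion W : [0,T] × Ω → ℝ with continuous sample paths, and for each N ∈ ℕ (N ≥ 1) define the Euler approximation Y^N_0 := 0 and Y^N_{k+1} := Y^N_k − (T/N)·(Y^N_k)³ + (W_{(k+1)T/N} − W_{kT/N}) for k = 0, 1, …, N−1. Then lim_{N → ∞} E[|Y^N_N|] = ∞. -/
/-!
On the event that the first Brownian increment is at least `A = 2N/T + 2` and all later ones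
lie in `[-1, 1]`, the cubic drift overshoots at every step: `|Y_{k+1}| ≥ Y_k²`, hence
`|Y^N_N| ≥ 2^(2^(N-1))`. The increments are independent `N(0, T/N)` variables, so the event has
probability at least `p^N`, where `p = exp(-O(N³))` is the Gaussian density at `A + 1`. Thus
`E|Y^N_N| ≥ 2^(2^(N-1)) exp(-O(N⁴))`, and the double exponential wins.
-/

open MeasureTheory ProbabilityTheory Filter

/-- `W` is a standard Brownian motion on the time interval `[0, T]` with
continuous sample paths: each `W t` is measurable, `W 0 = 0`, the sample paths
are continuous on `[0, T]`, the increment `W t - W s` is centered Gaussian with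
variance `t - s` for `0 ≤ s ≤ t ≤ T`, and increments over disjoint consecutive
time intervals are independent. -/
def IsStandardBrownianMotion {Ω : Type*} [MeasurableSpace Ω] (P : Measure Ω)
    (T : ℝ) (W : ℝ → Ω → ℝ) : Prop :=
  (∀ t, t ∈ Set.Icc 0 T → Measurable (W t)) ∧
  (∀ ω, W 0 ω = 0) ∧
  (∀ ω, ContinuousOn (fun t => W t ω) (Set.Icc 0 T)) ∧
  (∀ s t : ℝ, 0 ≤ s → s ≤ t → t ≤ T →
    Measure.map (fun ω => W t ω - W s ω) P = gaussianReal 0 (Real.toNNReal (t - s))) ∧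
  (∀ (n : ℕ) (t : Fin (n + 1) → ℝ), Monotone t → (∀ i, t i ∈ Set.Icc 0 T) →
    iIndepFun
      (fun (i : Fin n) => fun ω => W (t i.succ) ω - W (t i.castSucc) ω) P)

open Real
open scoped NNReal

lemma sq_le_abs_euler_step {h y z : ℝ} (hy : 2 ≤ |y|) (hhy : 2 ≤ h * |y|) (hz : |z| ≤ 1) :
    y ^ 2 ≤ |y - h * y ^ 3 + z| := by
  have hsq : h * y ^ 2 = h * |y| * |y| := by rw [mul_assoc, ← sq, sq_abs]
  have hdrift : |y - h * y ^ 3| = |y| * (h * y ^ 2 - 1) := by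
    rw [show y - h * y ^ 3 = y * (1 - h * y ^ 2) by ring, abs_mul, abs_sub_comm,
      abs_of_nonneg (a := h * y ^ 2 - 1) (by nlinarith)]
  have htri : |y - h * y ^ 3| - |z| ≤ |y - h * y ^ 3 + z| := by
    simpa using abs_sub_abs_le_abs_sub (y - h * y ^ 3) (-z)
  nlinarith [sq_abs y]

lemma two_pow_two_pow_le_abs_of_euler {h : ℝ} {y z : ℕ → ℝ} {n : ℕ} (h2 : 2 ≤ |y 0|)
    (hh : 2 ≤ h * |y 0|) (hz : ∀ k < n, |z k| ≤ 1)
    (hy : ∀ k < n, y (k + 1) = y k - h * y k ^ 3 + z k) :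
    |y 0| ≤ |y n| ∧ (2 : ℝ) ^ 2 ^ n ≤ |y n| := by
  induction n with
  | zero => simpa using h2
  | succ n ih =>
    obtain ⟨hy0n, hpow⟩ := ih (fun k hk => hz k (by omega)) (fun k hk => hy k (by omega))
    have hstep : y n ^ 2 ≤ |y (n + 1)| := by
      rw [hy n n.lt_succ_self]
      refine sq_le_abs_euler_step (h2.trans hy0n) (hh.trans ?_) (hz n n.lt_succ_self)
      have : 0 ≤ h := by nlinarith [abs_nonneg (y 0)]
      exact mul_le_mul_of_nonneg_left hy0n this
    have hsq : (2 : ℝ) ^ 2 ^ (n + 1) ≤ y n ^ 2 := by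
      rw [pow_succ, pow_mul, ← sq_abs (y n)]
      exact pow_le_pow_left₀ (by positivity) hpow 2
    constructor <;> nlinarith [sq_abs (y n)]

lemma tendsto_mul_pow_sub_mul_pow_atTop {a r : ℝ} (ha : 0 < a) (hr : 1 < r) (M : ℝ) (k : ℕ) :
    Tendsto (fun n : ℕ => a * r ^ n - M * (n : ℝ) ^ k) atTop atTop := by
  have hsmall : Tendsto (fun n : ℕ => a - M * ((n : ℝ) ^ k / r ^ n)) atTop (nhds a) := by
    simpa using ((tendsto_pow_const_div_const_pow_of_one_lt k hr).const_mul M).const_sub a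
  refine ((tendsto_pow_atTop_atTop_of_one_lt hr).atTop_mul_pos ha hsmall).congr fun n => ?_
  have : r ^ n ≠ 0 := by positivity
  field_simp

lemma tendsto_two_pow_two_pow_mul_pow_atTop {c : ℝ} (hc : 0 < c) (K : ℝ) :
    Tendsto (fun N : ℕ => (2 : ℝ) ^ 2 ^ (N - 1) * (c * exp (-K * N ^ 3)) ^ N) atTop atTop := by
  have hexp := tendsto_exp_atTop.comp
    (tendsto_mul_pow_sub_mul_pow_atTop (half_pos (log_pos one_lt_two)) one_lt_two
      (|log c| + |K|) 4)
  refine tendsto_atTop_mono' _ ?_ hexp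
  filter_upwards [eventually_ge_atTop 1] with N hN
  have hNR : (1 : ℝ) ≤ N := by exact_mod_cast hN
  have hrepr : (2 : ℝ) ^ 2 ^ (N - 1) * (c * exp (-K * N ^ 3)) ^ N
      = exp (2 ^ N / 2 * log 2 + N * log c - K * N ^ 4) := by
    rw [← exp_log hc, ← exp_add, ← exp_nat_mul, ← rpow_natCast, rpow_def_of_pos two_pos,
      ← exp_add]
    congr 1
    rw [show (2 : ℝ) ^ N = 2 * 2 ^ (N - 1) by rw [← pow_succ']; congr 1; omega]
    push_cast
    rw [log_exp]
    ring
  rw [Function.comp_apply, hrepr, exp_le_exp]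
  have hN4 : (N : ℝ) ≤ N ^ 4 := by
    calc (N : ℝ) = N ^ 1 := (pow_one _).symm
      _ ≤ N ^ 4 := pow_le_pow_right₀ hNR (by norm_num)
  have hlogc : -(|log c| * N ^ 4) ≤ N * log c := by
    nlinarith [neg_abs_le (log c), abs_nonneg (log c)]
  nlinarith [le_abs_self K, pow_nonneg (Nat.cast_nonneg N : (0 : ℝ) ≤ N) 4]

lemma gaussianPDFReal_le_of_abs_sub_le (μ : ℝ) (v : ℝ≥0) {x y : ℝ}
    (hxy : |x - μ| ≤ |y - μ|) :
    gaussianPDFReal μ v y ≤ gaussianPDFReal μ v x := by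
  rw [gaussianPDFReal, gaussianPDFReal, ← sq_abs (x - μ), ← sq_abs (y - μ)]
  gcongr

lemma ofReal_gaussianPDFReal_le_gaussianReal_Icc {μ : ℝ} {v : ℝ≥0} (hv : v ≠ 0) {a b : ℝ}
    (hμa : μ ≤ a) (hab : a + 1 ≤ b) :
    ENNReal.ofReal (gaussianPDFReal μ v b) ≤ gaussianReal μ v (Set.Icc a (a + 1)) := by
  rw [gaussianReal_apply μ hv]
  calc ENNReal.ofReal (gaussianPDFReal μ v b)
      = ∫⁻ _ in Set.Icc a (a + 1), ENNReal.ofReal (gaussianPDFReal μ v b) := by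
        simp [Real.volume_Icc]
    _ ≤ ∫⁻ x in Set.Icc a (a + 1), gaussianPDF μ v x := by
        refine setLIntegral_mono' measurableSet_Icc fun x hx => ENNReal.ofReal_le_ofReal ?_
        refine gaussianPDFReal_le_of_abs_sub_le μ v ?_
        rw [abs_of_nonneg (by linarith [hx.1]), abs_of_nonneg (by linarith)]
        linarith [hx.2]

lemma inv_sqrt_mul_exp_le_gaussianPDFReal (μ : ℝ) {v : ℝ≥0} (hv : v ≠ 0) {T : ℝ}
    (hvT : (v : ℝ) ≤ T) (x : ℝ) :
    (√(2 * π * T))⁻¹ * exp (-(x - μ) ^ 2 / (2 * v)) ≤ gaussianPDFReal μ v x := by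
  rw [gaussianPDFReal]
  gcongr

-- The threshold `2 * N / T + 2` makes `(T / N) * |Y 1| ≥ 2`, which starts the overshoot.
def eulerBlowupEvent {Ω : Type*} (W : ℝ → Ω → ℝ) (T : ℝ) (N : ℕ) : Set Ω :=
  ⋂ i : Fin N, (fun ω => W (((i : ℕ) + 1) * T / N) ω - W ((i : ℕ) * T / N) ω) ⁻¹'
    if (i : ℕ) = 0 then Set.Ici (2 * N / T + 2) else Set.Icc (-1) 1

lemma natCast_mul_div_mem_Icc {T : ℝ} (hT : 0 ≤ T) {k N : ℕ} (hk : k ≤ N) :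
    (k : ℝ) * T / N ∈ Set.Icc 0 T := by
  refine ⟨by positivity, div_le_of_le_mul₀ (Nat.cast_nonneg N) hT ?_⟩
  rw [mul_comm T]
  gcongr

lemma two_pow_two_pow_le_abs_of_mem_eulerBlowupEvent {Ω : Type*} {T : ℝ} (hT : 0 < T)
    {W : ℝ → Ω → ℝ} (hW0 : ∀ ω, W 0 ω = 0) {N : ℕ} (hN : 1 ≤ N) {Y : ℕ → Ω → ℝ}
    (hY0 : ∀ ω, Y 0 ω = 0)
    (hYrec : ∀ k < N, ∀ ω, Y (k + 1) ω = Y k ω - (T / N) * (Y k ω) ^ 3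
      + (W (((k : ℝ) + 1) * T / N) ω - W ((k : ℝ) * T / N) ω))
    {ω : Ω} (hω : ω ∈ eulerBlowupEvent W T N) :
    (2 : ℝ) ^ 2 ^ (N - 1) ≤ |Y N ω| := by
  obtain ⟨n, rfl⟩ : ∃ n, N = n + 1 := ⟨N - 1, by omega⟩
  have hinc := Set.mem_iInter.1 hω
  have hY1 : 2 * ((n + 1 : ℕ) : ℝ) / T + 2 ≤ Y 1 ω := by
    simpa [hYrec 0 (by omega) ω, hY0, hW0] using hinc ⟨0, by omega⟩
  have hA : (0 : ℝ) ≤ 2 * ((n + 1 : ℕ) : ℝ) / T := by positivity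
  have hdrift : 2 ≤ T / (n + 1 : ℕ) * Y 1 ω :=
    calc (2 : ℝ) ≤ 2 + 2 * (T / (n + 1 : ℕ)) := le_add_of_nonneg_right (by positivity)
      _ = T / (n + 1 : ℕ) * (2 * ((n + 1 : ℕ) : ℝ) / T + 2) := by field_simp
      _ ≤ T / (n + 1 : ℕ) * Y 1 ω := by gcongr
  have hY1_abs : |Y 1 ω| = Y 1 ω := abs_of_nonneg (by linarith)
  have hz : ∀ k < n, |W ((((k + 1 : ℕ) : ℝ) + 1) * T / (n + 1 : ℕ)) ω
      - W (((k + 1 : ℕ) : ℝ) * T / (n + 1 : ℕ)) ω| ≤ 1 := fun k hk => by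
    simpa [abs_le] using hinc ⟨k + 1, by omega⟩
  have hblow := two_pow_two_pow_le_abs_of_euler (y := fun k => Y (k + 1) ω)
    (by rw [hY1_abs]; linarith) (by rwa [hY1_abs]) hz
    (fun k hk => hYrec (k + 1) (by omega) ω)
  simpa using hblow.2

namespace IsStandardBrownianMotion

variable {Ω : Type*} [MeasurableSpace Ω] {P : Measure Ω} {T : ℝ} {W : ℝ → Ω → ℝ}

lemma measure_iInter_increments (hW : IsStandardBrownianMotion P T W) {n : ℕ}
    {t : Fin (n + 1) → ℝ} (ht : Monotone t) (htT : ∀ i, t i ∈ Set.Icc 0 T)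
    {S : Fin n → Set ℝ} (hS : ∀ i, MeasurableSet (S i)) :
    P (⋂ i, (fun ω => W (t i.succ) ω - W (t i.castSucc) ω) ⁻¹' S i)
      = ∏ i, gaussianReal 0 (t i.succ - t i.castSucc).toNNReal (S i) := by
  rw [(hW.2.2.2.2 n t ht htT).meas_iInter fun i => ⟨S i, hS i, rfl⟩]
  refine Finset.prod_congr rfl fun i _ => ?_
  have hmeas : Measurable fun ω => W (t i.succ) ω - W (t i.castSucc) ω :=
    (hW.1 _ (htT _)).sub (hW.1 _ (htT _))
  rw [← Measure.map_apply hmeas (hS i), hW.2.2.2.1 _ _ (htT _).1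
    (ht (Fin.castSucc_le_succ i)) (htT _).2]

lemma measurableSet_eulerBlowupEvent (hW : IsStandardBrownianMotion P T W) (hT : 0 ≤ T)
    (N : ℕ) : MeasurableSet (eulerBlowupEvent W T N) := by
  refine MeasurableSet.iInter fun i => Measurable.sub ?_ ?_ ?_
  · exact hW.1 _ (by exact_mod_cast natCast_mul_div_mem_Icc hT (k := i + 1) i.isLt)
  · exact hW.1 _ (natCast_mul_div_mem_Icc hT i.2.le)
  · split_ifs
    exacts [measurableSet_Ici, measurableSet_Icc]

lemma ofReal_gaussianPDFReal_pow_le_measure_eulerBlowupEvent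
    (hW : IsStandardBrownianMotion P T W) (hT : 0 < T) {N : ℕ} (hN : 1 ≤ N) :
    ENNReal.ofReal (gaussianPDFReal 0 (T / N).toNNReal (2 * N / T + 3)) ^ N
      ≤ P (eulerBlowupEvent W T N) := by
  have hN0 : (0 : ℝ) < N := by exact_mod_cast hN
  set t : Fin (N + 1) → ℝ := fun i => (i : ℕ) * T / N
  have htT : ∀ i, t i ∈ Set.Icc 0 T := fun i => natCast_mul_div_mem_Icc hT.le i.is_le
  have ht : Monotone t := fun i j hij => by
    simp only [t]
    gcongr
    exact_mod_cast hij
  set S : Fin N → Set ℝ := fun i =>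
    if (i : ℕ) = 0 then Set.Ici (2 * N / T + 2) else Set.Icc (-1) 1
  have hS : ∀ i, MeasurableSet (S i) := fun i => by
    simp only [S]
    split_ifs
    exacts [measurableSet_Ici, measurableSet_Icc]
  have hE : eulerBlowupEvent W T N
      = ⋂ i, (fun ω => W (t i.succ) ω - W (t i.castSucc) ω) ⁻¹' S i := by
    simp [eulerBlowupEvent, t, S]
  have hvar : ∀ i : Fin N, t i.succ - t i.castSucc = T / N := fun i => by
    simp only [t, Fin.val_succ, Fin.val_castSucc]
    push_cast
    ring
  rw [hE, hW.measure_iInter_increments ht htT hS]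
  simp only [hvar]
  refine le_of_eq_of_le (by rw [Finset.card_univ, Fintype.card_fin])
    (Finset.pow_card_le_prod Finset.univ _ _ fun i _ => ?_)
  have hv : (T / N).toNNReal ≠ 0 := by simp [hT, hN0]
  have hA : (0 : ℝ) ≤ 2 * N / T := by positivity
  by_cases hi : (i : ℕ) = 0
  · refine (ofReal_gaussianPDFReal_le_gaussianReal_Icc hv (a := 2 * N / T + 2) (by linarith)
      (by linarith)).trans (measure_mono ?_)
    simp only [S, hi, if_true]
    exact Set.Icc_subset_Ici_self
  · refine (ofReal_gaussianPDFReal_le_gaussianReal_Icc hv le_rfl (a := 0) (by linarith)).trans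
      (measure_mono ?_)
    simp only [S, hi, if_false]
    exact Set.Icc_subset_Icc (by norm_num) (by norm_num)

lemma ofReal_le_lintegral_abs_euler (hW : IsStandardBrownianMotion P T W) (hT : 0 < T)
    {N : ℕ} (hN : 1 ≤ N) {Y : ℕ → Ω → ℝ} (hY0 : ∀ ω, Y 0 ω = 0)
    (hYrec : ∀ k < N, ∀ ω, Y (k + 1) ω = Y k ω - (T / N) * (Y k ω) ^ 3
      + (W (((k : ℝ) + 1) * T / N) ω - W ((k : ℝ) * T / N) ω)) :
    ENNReal.ofReal ((2 : ℝ) ^ 2 ^ (N - 1)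
        * ((√(2 * π * T))⁻¹ * exp (-((2 / T + 3) ^ 2 / (2 * T)) * N ^ 3)) ^ N)
      ≤ ∫⁻ ω, ENNReal.ofReal |Y N ω| ∂P := by
  have hN0 : (0 : ℝ) < N := by exact_mod_cast hN
  have hNR : (1 : ℝ) ≤ N := by exact_mod_cast hN
  have hv : ((T / N).toNNReal : ℝ) = T / N := Real.coe_toNNReal _ (div_pos hT hN0).le
  have hpdf : (√(2 * π * T))⁻¹ * exp (-((2 / T + 3) ^ 2 / (2 * T)) * N ^ 3)
      ≤ gaussianPDFReal 0 (T / N).toNNReal (2 * N / T + 3) := by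
    refine le_trans ?_ (inv_sqrt_mul_exp_le_gaussianPDFReal 0 (by simp [hT, hN0])
      (hv.trans_le (div_le_self hT.le hNR)) _)
    gcongr
    have hlin : 2 * N / T + 3 ≤ (2 / T + 3) * N := by
      rw [mul_div_right_comm, add_mul]
      nlinarith
    have hrhs : (2 / T + 3) ^ 2 / (2 * T) * N ^ 3 * (2 * (T / N)) = ((2 / T + 3) * N) ^ 2 := by
      field_simp
    rw [hv, sub_zero, neg_mul, neg_div, neg_le_neg_iff, div_le_iff₀ (by positivity), hrhs]
    gcongr
  set E := eulerBlowupEvent W T N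
  calc ENNReal.ofReal ((2 : ℝ) ^ 2 ^ (N - 1)
        * ((√(2 * π * T))⁻¹ * exp (-((2 / T + 3) ^ 2 / (2 * T)) * N ^ 3)) ^ N)
      ≤ ENNReal.ofReal ((2 : ℝ) ^ 2 ^ (N - 1))
        * ENNReal.ofReal (gaussianPDFReal 0 (T / N).toNNReal (2 * N / T + 3)) ^ N := by
        rw [← ENNReal.ofReal_pow (gaussianPDFReal_nonneg _ _ _),
          ← ENNReal.ofReal_mul (by positivity)]
        gcongr
    _ ≤ ENNReal.ofReal ((2 : ℝ) ^ 2 ^ (N - 1)) * P E := by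
        gcongr
        exact hW.ofReal_gaussianPDFReal_pow_le_measure_eulerBlowupEvent hT hN
    _ = ∫⁻ _ in E, ENNReal.ofReal ((2 : ℝ) ^ 2 ^ (N - 1)) ∂P :=
        (setLIntegral_const _ _).symm
    _ ≤ ∫⁻ ω in E, ENNReal.ofReal |Y N ω| ∂P :=
        setLIntegral_mono' (hW.measurableSet_eulerBlowupEvent hT.le N) fun ω hω =>
          ENNReal.ofReal_le_ofReal
            (two_pow_two_pow_le_abs_of_mem_eulerBlowupEvent hT hW.2.1 hN hY0 hYrec hω)
    _ ≤ ∫⁻ ω, ENNReal.ofReal |Y N ω| ∂P := setLIntegral_le_lintegral _ _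

end IsStandardBrownianMotion

theorem stmt_5_general {Ω : Type*} [MeasureSpace Ω]
    (T : ℝ) (hT : 0 < T)
    (W : ℝ → Ω → ℝ) (hW : IsStandardBrownianMotion ℙ T W)
    (Y : ℕ → ℕ → Ω → ℝ)
    (hY0 : ∀ N, 1 ≤ N → ∀ ω, Y N 0 ω = 0)
    (hYrec : ∀ N, 1 ≤ N → ∀ k < N, ∀ ω,
      Y N (k + 1) ω = Y N k ω - (T / N) * (Y N k ω) ^ 3
        + (W (((k : ℝ) + 1) * T / N) ω - W ((k : ℝ) * T / N) ω)) :
    Tendsto (fun N : ℕ => ∫⁻ ω, ENNReal.ofReal |Y N N ω| ∂ℙ) atTop (nhds ⊤) := by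
  refine tendsto_nhds_top_mono (ENNReal.tendsto_ofReal_atTop.comp
    (tendsto_two_pow_two_pow_mul_pow_atTop (c := (√(2 * π * T))⁻¹) (by positivity)
      ((2 / T + 3) ^ 2 / (2 * T)))) ?_
  filter_upwards [eventually_ge_atTop 1] with N hN
  exact hW.ofReal_le_lintegral_abs_euler hT hN (hY0 N hN) (hYrec N hN)

theorem stmt_5 {Ω : Type*} [MeasureSpace Ω] [IsProbabilityMeasure (ℙ : Measure Ω)]
    (T : ℝ) (hT : 0 < T)
    (W : ℝ → Ω → ℝ) (hW : IsStandardBrownianMotion ℙ T W)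
    (Y : ℕ → ℕ → Ω → ℝ)
    (hY0 : ∀ N, 1 ≤ N → ∀ ω, Y N 0 ω = 0)
    (hYrec : ∀ N, 1 ≤ N → ∀ k < N, ∀ ω,
      Y N (k + 1) ω = Y N k ω - (T / N) * (Y N k ω) ^ 3
        + (W (((k : ℝ) + 1) * T / N) ω - W ((k : ℝ) * T / N) ω)) :
    Tendsto (fun N : ℕ => ∫⁻ ω, ENNReal.ofReal |Y N N ω| ∂ℙ) atTop (nhds ⊤) :=
  stmt_5_general T hT W hW Y hY0 hYrec
end

section
/- Let T > 0, let N ≥ 1 be an integer, let C ≥ 1 and β > α > 1 be real constants, and let f, g : ℝ → ℝ be functions satisfying max(|f(x)|, |g(x)|) ≥ |x|^β / C and min(|f(x)|, |g(x)|) ≤ C·|x|^α for every x ∈ ℝ with |x| ≥ C. Set r := max(2, C, (2CN/T + 2C²)^{1/(β−α)}). Suppose y_1, …, y_N and w_1, …, w_{N−1} are real numbers satisfying y_{k+1} = y_k + (T/N)·f(y_k) + g(y_k)·w_k and |w_k| ∈ [T/N, 2T/N] for every k = 1, …, N−1, and suppose |y_1| ≥ r. Then |y_k| ≥ r^{α^{k−1}}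 for every k = 1, 2, …, N. -/
/-!
Write `z = |y k|` and `h = T / N`. One of `h f(y k)` and `g(y k) w k` has size at least
`h z^β / C`, the other at most `2 h C z^α`, so `|y (k+1)| ≥ h z^β / C - z - 2 h C z^α`.
Once `z^(β-α) ≥ 2C/h + 2C²`, which the choice of `r` guarantees for `z ≥ r`, this is at least
`z^α`. Hence `|y (k+1)| ≥ |y k|^α` along the whole orbit, and iterating from `|y 1| ≥ r` gives
`|y k| ≥ r^(α^(k-1))`.
-/

theorem max_sub_le_abs_add_mul_add_mul {h x a b w : ℝ} (hw : |w| ∈ Set.Icc h (2 * h)) :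
    h * max |a| |b| - |x| - 2 * h * min |a| |b| ≤ |x + h * a + b * w| := by
  obtain ⟨hwl, hwu⟩ := hw
  have hh : 0 ≤ h := by linarith
  have hha : |h * a| = h * |a| := by rw [abs_mul, abs_of_nonneg hh]
  have hbw : |b * w| = |b| * |w| := abs_mul b w
  rcases le_total |b| |a| with hba | hab
  · rw [max_eq_left hba, min_eq_right hba]
    have htri := abs_add_three (x + h * a + b * w) (-x) (-(b * w))
    rw [show x + h * a + b * w + -x + -(b * w) = h * a by ring, abs_neg, abs_neg] at htri
    have : |b| * |w| ≤ |b| * (2 * h) := mul_le_mul_of_nonneg_left hwu (abs_nonneg b)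
    linarith
  · rw [max_eq_right hab, min_eq_left hab]
    have htri := abs_add_three (x + h * a + b * w) (-x) (-(h * a))
    rw [show x + h * a + b * w + -x + -(h * a) = b * w by ring, abs_neg, abs_neg] at htri
    have : |b| * h ≤ |b| * |w| := mul_le_mul_of_nonneg_left hwl (abs_nonneg b)
    nlinarith [abs_nonneg a]

theorem rpow_le_mul_sub_sub {h C α β z M m : ℝ} (hh : 0 < h) (hC : 0 < C) (hα : 1 ≤ α)
    (hz : 1 ≤ z) (hM : z ^ β / C ≤ M) (hm : m ≤ C * z ^ α)
    (hgap : 2 * C / h + 2 * C ^ 2 ≤ z ^ (β - α)) :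
    z ^ α ≤ h * M - z - 2 * h * m := by
  have hz0 : 0 < z := by linarith
  have hzα : z ≤ z ^ α := Real.self_le_rpow_of_one_le hz hα
  have hsplit : z ^ β = z ^ α * z ^ (β - α) := by
    rw [← Real.rpow_add hz0, add_sub_cancel]
  have hgrowth : 2 * z ^ α + 2 * h * (C * z ^ α) ≤ h * (z ^ β / C) := by
    have hscaled := mul_le_mul_of_nonneg_left hgap (by positivity : 0 ≤ h * z ^ α / C)
    rw [hsplit]
    calc 2 * z ^ α + 2 * h * (C * z ^ α) = h * z ^ α / C * (2 * C / h + 2 * C ^ 2) := by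
          field_simp
      _ ≤ h * z ^ α / C * z ^ (β - α) := hscaled
      _ = h * (z ^ α * z ^ (β - α) / C) := by ring
  nlinarith [mul_le_mul_of_nonneg_left hM hh.le, mul_le_mul_of_nonneg_left hm hh.le]

theorem rpow_le_abs_euler_step {h C α β x a b w : ℝ} (hh : 0 < h) (hC : 0 < C) (hα : 1 ≤ α)
    (hx : 1 ≤ |x|) (hmax : |x| ^ β / C ≤ max |a| |b|) (hmin : min |a| |b| ≤ C * |x| ^ α)
    (hw : |w| ∈ Set.Icc h (2 * h)) (hgap : 2 * C / h + 2 * C ^ 2 ≤ |x| ^ (β - α)) :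
    |x| ^ α ≤ |x + h * a + b * w| :=
  (rpow_le_mul_sub_sub hh hC hα hx hmax hmin hgap).trans (max_sub_le_abs_add_mul_add_mul hw)

theorem rpow_pow_le_of_rpow_le_succ {u : ℕ → ℝ} {r α : ℝ} {N : ℕ} (hr : 1 ≤ r) (hα : 1 ≤ α)
    (hstep : ∀ k, 1 ≤ k → k < N → r ≤ u k → u k ^ α ≤ u (k + 1)) (h1 : r ≤ u 1) :
    ∀ k, 1 ≤ k → k ≤ N → r ^ (α ^ (k - 1)) ≤ u k := by
  intro k hk
  induction k, hk using Nat.le_induction with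
  | base => intro _; simpa using h1
  | succ k hk ih =>
    intro hkN
    have hprev := ih (by omega)
    have hrk : r ≤ u k := (Real.self_le_rpow_of_one_le hr (one_le_pow₀ hα)).trans hprev
    calc r ^ (α ^ (k + 1 - 1)) = (r ^ (α ^ (k - 1))) ^ α := by
          rw [← Real.rpow_mul (by linarith), ← pow_succ, Nat.sub_add_cancel hk, Nat.add_sub_cancel]
      _ ≤ u k ^ α := Real.rpow_le_rpow (by positivity) hprev (by linarith)
      _ ≤ u (k + 1) := hstep k hk hkN hrk

theorem stmt_8_general (T : ℝ) (hT : 0 < T) (N : ℕ)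
    (C α β : ℝ) (hC : 1 ≤ C) (hα : 1 < α) (hαβ : α < β)
    (f g : ℝ → ℝ)
    (hmax : ∀ x : ℝ, C ≤ |x| → |x| ^ β / C ≤ max |f x| |g x|)
    (hmin : ∀ x : ℝ, C ≤ |x| → min |f x| |g x| ≤ C * |x| ^ α)
    (r : ℝ) (hr : r = max 2 (max C ((2 * C * N / T + 2 * C ^ 2) ^ (1 / (β - α)))))
    (y w : ℕ → ℝ)
    (hrec : ∀ k, 1 ≤ k → k ≤ N - 1 → y (k + 1) = y k + (T / N) * f (y k) + g (y k) * w k)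
    (hw : ∀ k, 1 ≤ k → k ≤ N - 1 → |w k| ∈ Set.Icc (T / N) (2 * T / N))
    (hy1 : r ≤ |y 1|) :
    ∀ k, 1 ≤ k → k ≤ N → r ^ (α ^ (k - 1)) ≤ |y k| := by
  have hr2 : 2 ≤ r := hr ▸ le_max_left _ _
  have hrC : C ≤ r := hr ▸ (le_max_left _ _).trans (le_max_right _ _)
  have hgap : 2 * C * N / T + 2 * C ^ 2 ≤ r ^ (β - α) := by
    rw [← Real.rpow_inv_le_iff_of_pos (by positivity) (by linarith) (by linarith), ← one_div]
    exact hr ▸ (le_max_right _ _).trans (le_max_right _ _)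
  refine rpow_pow_le_of_rpow_le_succ (by linarith) hα.le (fun k hk hkN hrk => ?_) hy1
  have hN : (0 : ℝ) < N := by exact_mod_cast (by omega : 0 < N)
  have hxC : C ≤ |y k| := hrC.trans hrk
  rw [hrec k hk (by omega)]
  refine rpow_le_abs_euler_step (div_pos hT hN) (by linarith) hα.le (by linarith) (hmax _ hxC)
    (hmin _ hxC) (by simpa only [mul_div_assoc] using hw k hk (by omega)) ?_
  calc 2 * C / (T / N) + 2 * C ^ 2 = 2 * C * N / T + 2 * C ^ 2 := by rw [div_div_eq_mul_div]
    _ ≤ r ^ (β - α) := hgap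
    _ ≤ |y k| ^ (β - α) := Real.rpow_le_rpow (by linarith) hrk (by linarith)

theorem stmt_8 (T : ℝ) (hT : 0 < T) (N : ℕ) (hN : 1 ≤ N)
    (C α β : ℝ) (hC : 1 ≤ C) (hα : 1 < α) (hαβ : α < β)
    (f g : ℝ → ℝ)
    (hmax : ∀ x : ℝ, C ≤ |x| → |x| ^ β / C ≤ max |f x| |g x|)
    (hmin : ∀ x : ℝ, C ≤ |x| → min |f x| |g x| ≤ C * |x| ^ α)
    (r : ℝ) (hr : r = max 2 (max C ((2 * C * N / T + 2 * C ^ 2) ^ (1 / (β - α)))))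
    (y w : ℕ → ℝ)
    (hrec : ∀ k, 1 ≤ k → k ≤ N - 1 → y (k + 1) = y k + (T / N) * f (y k) + g (y k) * w k)
    (hw : ∀ k, 1 ≤ k → k ≤ N - 1 → |w k| ∈ Set.Icc (T / N) (2 * T / N))
    (hy1 : r ≤ |y 1|) :
    ∀ k, 1 ≤ k → k ≤ N → r ^ (α ^ (k - 1)) ≤ |y k| :=
  stmt_8_general T hT N C α β hC hα hαβ f g hmax hmin r hr y w hrec hw hy1
end

section
/- Let T > 0, let N ≥ 1 be an integer, let C ≥ 1 and β > α > 1 be real constants, and let f, g : ℝ → ℝ be functions satisfying max(|f(x)|, |g(x)|) ≥ |x|^β / C and min(|f(x)|, |g(x)|) ≤ C·|x|^α for every x ∈ ℝ with |x| ≥ C. Let r ≥ max(2, C) satisfy (T/(NC))·r^{β−α} ≥ 2 + 2TC/N. Then for all real numbers y and w with |y| ≥ r and |w| ∈ [T/N, 2T/N], one has |y + (T/N)·f(y) + g(y)·w| ≥ |y|^α. -/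
theorem stmt_9 (T : ℝ) (hT : 0 < T) (N : ℕ) (hN : 1 ≤ N)
    (C α β : ℝ) (hC : 1 ≤ C) (hα : 1 < α) (hαβ : α < β)
    (f g : ℝ → ℝ)
    (hmax : ∀ x : ℝ, C ≤ |x| → |x| ^ β / C ≤ max |f x| |g x|)
    (hmin : ∀ x : ℝ, C ≤ |x| → min |f x| |g x| ≤ C * |x| ^ α)
    (r : ℝ) (hr : max 2 C ≤ r)
    (hr2 : 2 + 2 * T * C / N ≤ (T / (N * C)) * r ^ (β - α)) :
    ∀ y w : ℝ, r ≤ |y| → |w| ∈ Set.Icc (T / N) (2 * T / N) →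
      |y| ^ α ≤ |y + (T / N) * f y + g y * w| := by
  intro y w hy hw
  obtain ⟨hw1, hw2⟩ := hw
  have hN0 : (0:ℝ) < N := by exact_mod_cast Nat.pos_of_ne_zero (by omega)
  have hh : 0 < T / N := div_pos hT hN0
  have hC0 : (0:ℝ) < C := by linarith
  have h2a : 2 ≤ |y| := le_trans (le_trans (le_max_left 2 C) hr) hy
  have hCa : C ≤ |y| := le_trans (le_trans (le_max_right 2 C) hr) hy
  have ha0 : 0 < |y| := by linarith
  have hr0 : 0 < r := lt_of_lt_of_le (by norm_num) (le_trans (le_max_left 2 C) hr)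
  have hpow1 : r ^ (β - α) ≤ |y| ^ (β - α) :=
    Real.rpow_le_rpow hr0.le hy (by linarith)
  have hTNC : 0 ≤ T / (N * C) := by positivity
  have h2' : 2 + 2 * T * C / N ≤ T / (N * C) * |y| ^ (β - α) :=
    le_trans hr2 (mul_le_mul_of_nonneg_left hpow1 hTNC)
  have hsplit : |y| ^ (β - α) * |y| ^ α = |y| ^ β := by
    rw [← Real.rpow_add ha0]; ring_nf
  have haα : |y| ≤ |y| ^ α := by
    nth_rewrite 1 [← Real.rpow_one |y|]
    exact Real.rpow_le_rpow_of_exponent_le (by linarith) hα.le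
  have haα0 : 0 < |y| ^ α := Real.rpow_pos_of_pos ha0 α
  have key : |y| ^ α + |y| + 2 * (T / N) * C * |y| ^ α ≤ T / N * |y| ^ β / C := by
    have hmul := mul_le_mul_of_nonneg_right h2' haα0.le
    have e1 : T / (↑N * C) * |y| ^ (β - α) * |y| ^ α = T / ↑N * |y| ^ β / C := by
      rw [mul_assoc, hsplit]; field_simp
    rw [e1] at hmul
    ring_nf at hmul ⊢
    nlinarith [haα]
  rcases le_total (|g y|) (|f y|) with hcase | hcase
  · have hf := hmax y hCa
    rw [max_eq_left hcase] at hf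
    have hg := hmin y hCa
    rw [min_eq_right hcase] at hg
    have t1 := abs_add_three (y + T / N * f y + g y * w) (-y) (-(g y * w))
    have e : (y + T / N * f y + g y * w) + -y + -(g y * w) = T / N * f y := by ring
    rw [e, abs_neg, abs_neg, abs_mul, abs_mul, abs_of_pos hh] at t1
    have b1 : T / N * (|y| ^ β / C) ≤ T / N * |f y| :=
      mul_le_mul_of_nonneg_left hf hh.le
    have b2 : |g y| * |w| ≤ C * |y| ^ α * (2 * T / N) :=
      mul_le_mul hg hw2 (abs_nonneg w) (by positivity)
    ring_nf at t1 b1 b2 key ⊢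
    nlinarith [t1, b1, b2, key]
  · have hg := hmax y hCa
    rw [max_eq_right hcase] at hg
    have hf := hmin y hCa
    rw [min_eq_left hcase] at hf
    have t2 := abs_add_three (y + T / N * f y + g y * w) (-y) (-(T / N * f y))
    have e : (y + T / N * f y + g y * w) + -y + -(T / N * f y) = g y * w := by ring
    rw [e, abs_neg, abs_neg, abs_mul, abs_mul, abs_of_pos hh] at t2
    have b1 : |y| ^ β / C * (T / N) ≤ |g y| * |w| :=
      mul_le_mul hg hw1 hh.le (abs_nonneg _)
    have b2 : T / N * |f y| ≤ T / N * (C * |y| ^ α) :=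
      mul_le_mul_of_nonneg_left hf hh.le
    have b3 : 0 ≤ T / N * (C * |y| ^ α) := by positivity
    ring_nf at t2 b1 b2 b3 key ⊢
    linarith [t2, b1, b2, b3, key]
end
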